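/- arXiv:2006.01308 — 4 statements merged into one kernel-verified Lean document; each statement's English description precedes it below -/
import Mathlib

section
/- Let n ≥ 3, p = (n+2)/(n−2), let U be the standard bubble and Z_{n+1}(y) = ((n−2)/2) U(y) + y·∇U(y). Then the functions y ↦ U(y)^{p−1} Z_{n+1}(y) and y ↦ U(y)^{p−1} Z_{n+1}(y)² are integrable on ℝⁿ, and the constants c₁ := −p ∫_{ℝⁿ} U(y)^{p−1} Z_{n+1}(y) dy and c₂ := ∫_{ℝⁿ} U(y)^{p−1} Z_{n+1}(y)² dy are strictly positive (in particular ∫_{ℝⁿ} U^{p−1} Z_{n+1} dy < 0). -/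
/-!
With `t = ‖y‖²` and `c = (n - 2) / 2`, the bubble is `U = α (1 + t)^(-c)`, so
`U^(p-1) = α^(p-1) (1 + t)^(-2)` and `Z_{n+1} = c U + y·∇U = α c (1 - t) (1 + t)^(-c-1)`.
Hence `U^(p-1) Z_{n+1}` and `U^(p-1) Z_{n+1}²` are positive multiples of
`(1 - t) (1 + t)^(-(n+4)/2)` and `(1 - t)² (1 + t)^(-(n+2))`, which decay fast enough to be
integrable on `ℝⁿ`. The second is nonnegative and positive at the origin. In polar coordinates the
integral of the first is `n |B₁|` times `∫₀^∞ r^(n-1) (1 - r²) (1 + r²)^(-(n+4)/2) dr`, which has an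
explicit antiderivative and equals `(2 - n) / (n (n + 2)) < 0`.
-/

open Real MeasureTheory Filter Topology Set Metric Module
open scoped RealInnerProductSpace

lemma hasDerivAt_pow_mul_one_add_sq_rpow {d : ℕ} (hd : 0 < d) (s r : ℝ) :
    HasDerivAt (fun r : ℝ => r ^ d * (1 + r ^ 2) ^ (-s))
      (r ^ (d - 1) * (d + (d - 2 * s) * r ^ 2) * (1 + r ^ 2) ^ (-s - 1)) r := by
  have hpos : 0 < 1 + r ^ 2 := by positivity
  have hsq : HasDerivAt (fun r : ℝ => 1 + r ^ 2) (2 * r) r := by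
    simpa using (hasDerivAt_pow 2 r).const_add 1
  refine ((hasDerivAt_pow d r).mul (hsq.rpow_const (p := -s) (Or.inl hpos.ne'))).congr_deriv ?_
  obtain ⟨e, rfl⟩ : ∃ e, d = e + 1 := ⟨d - 1, by omega⟩
  rw [show -s = -s - 1 + 1 by ring, rpow_add_one hpos.ne', add_sub_cancel_right]
  push_cast
  ring

lemma tendsto_one_add_sq_inv_atTop : Tendsto (fun r : ℝ => (1 + r ^ 2)⁻¹) atTop (𝓝 0) :=
  tendsto_inv_atTop_zero.comp (tendsto_atTop_add_const_left _ 1 (tendsto_pow_atTop two_ne_zero))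

lemma tendsto_pow_mul_one_add_sq_rpow_neg_half (d : ℕ) :
    Tendsto (fun r : ℝ => r ^ d * (1 + r ^ 2) ^ (-((d : ℝ) / 2))) atTop (𝓝 1) := by
  have hratio : Tendsto (fun r : ℝ => (1 - (1 + r ^ 2)⁻¹) ^ ((d : ℝ) / 2)) atTop (𝓝 1) := by
    simpa using (tendsto_const_nhds (x := (1 : ℝ)) |>.sub tendsto_one_add_sq_inv_atTop).rpow_const
      (p := (d : ℝ) / 2) (Or.inl (by norm_num))
  refine hratio.congr' ?_
  filter_upwards [eventually_ge_atTop 0] with r hr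
  have hpos : 0 < 1 + r ^ 2 := by positivity
  have hpow : r ^ d = (r ^ 2) ^ ((d : ℝ) / 2) := by
    rw [← rpow_natCast r 2, ← rpow_mul hr, Nat.cast_ofNat, mul_div_cancel₀ _ two_ne_zero,
      rpow_natCast]
  rw [show 1 - (1 + r ^ 2)⁻¹ = r ^ 2 * (1 + r ^ 2)⁻¹ by field_simp; ring,
    mul_rpow (by positivity) (inv_nonneg.2 hpos.le), inv_rpow hpos.le, rpow_neg hpos.le, hpow]

/-- From `1 - r² = 2 / (d + 2) * (d - 2 r²) + (2 - d) / (d + 2) * (1 + r²)` and the derivative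
formula `hasDerivAt_pow_mul_one_add_sq_rpow` for the exponents `d / 2 + 1` and `d / 2`. -/
noncomputable def radialAntideriv (d : ℕ) (r : ℝ) : ℝ :=
  2 / (d + 2) * (r ^ d * (1 + r ^ 2) ^ (-((d : ℝ) / 2 + 1)))
    + (2 - d) / (d * (d + 2)) * (r ^ d * (1 + r ^ 2) ^ (-((d : ℝ) / 2)))

lemma hasDerivAt_radialAntideriv {d : ℕ} (hd : 0 < d) (r : ℝ) :
    HasDerivAt (radialAntideriv d)
      (r ^ (d - 1) * ((1 - r ^ 2) * (1 + r ^ 2) ^ (-((d : ℝ) / 2 + 2)))) r := by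
  refine (((hasDerivAt_pow_mul_one_add_sq_rpow hd _ r).const_mul _).add
    ((hasDerivAt_pow_mul_one_add_sq_rpow hd _ r).const_mul _)).congr_deriv ?_
  have hpos : 0 < 1 + r ^ 2 := by positivity
  have hd' : (d : ℝ) ≠ 0 := by positivity
  rw [show -((d : ℝ) / 2) - 1 = -((d : ℝ) / 2 + 2) + 1 by ring, rpow_add_one hpos.ne',
    show -((d : ℝ) / 2 + 1) - 1 = -((d : ℝ) / 2 + 2) by ring]
  field_simp
  ring

lemma tendsto_radialAntideriv_atTop (d : ℕ) :
    Tendsto (radialAntideriv d) atTop (𝓝 ((2 - (d : ℝ)) / (d * (d + 2)))) := by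
  have hG := tendsto_pow_mul_one_add_sq_rpow_neg_half d
  have hG' : Tendsto (fun r : ℝ => r ^ d * (1 + r ^ 2) ^ (-((d : ℝ) / 2 + 1))) atTop (𝓝 0) := by
    refine (mul_zero (1 : ℝ) ▸ hG.mul tendsto_one_add_sq_inv_atTop).congr'
      (Eventually.of_forall fun r => ?_)
    simp only [neg_add, rpow_add (by positivity : (0 : ℝ) < 1 + r ^ 2), rpow_neg_one, mul_assoc]
  have h := (hG'.const_mul (2 / (d + 2) : ℝ)).add (hG.const_mul ((2 - d) / (d * (d + 2)) : ℝ))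
  rwa [mul_zero, mul_one, zero_add] at h

lemma integral_Ioi_pow_mul_one_sub_sq_mul_rpow {d : ℕ} (hd : 0 < d)
    (hint : IntegrableOn
      (fun r : ℝ => r ^ (d - 1) * ((1 - r ^ 2) * (1 + r ^ 2) ^ (-((d : ℝ) / 2 + 2)))) (Ioi 0)) :
    ∫ r in Ioi (0 : ℝ), r ^ (d - 1) * ((1 - r ^ 2) * (1 + r ^ 2) ^ (-((d : ℝ) / 2 + 2)))
      = (2 - (d : ℝ)) / (d * (d + 2)) := by
  rw [integral_Ioi_of_hasDerivAt_of_tendsto' (fun r _ => hasDerivAt_radialAntideriv hd r) hint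
    (tendsto_radialAntideriv_atTop d)]
  simp [radialAntideriv, zero_pow hd.ne']

section Radial

variable {E : Type*} [NormedAddCommGroup E] [NormedSpace ℝ E] [FiniteDimensional ℝ E]
  [MeasurableSpace E] [BorelSpace E] {μ : Measure E} [μ.IsAddHaarMeasure]

lemma integrable_one_sub_norm_sq_pow_mul_rpow (k : ℕ) {s : ℝ}
    (hs : finrank ℝ E + 2 * k < 2 * s) :
    Integrable (fun y : E => (1 - ‖y‖ ^ 2) ^ k * (1 + ‖y‖ ^ 2) ^ (-s)) μ := by
  refine (integrable_rpow_neg_one_add_norm_sq (μ := μ) (r := 2 * s - 2 * k) (by linarith)).mono'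
    (Measurable.aestronglyMeasurable (by fun_prop)) (Eventually.of_forall fun y => ?_)
  have hpos : 0 < 1 + ‖y‖ ^ 2 := by positivity
  have hle : |1 - ‖y‖ ^ 2| ≤ 1 + ‖y‖ ^ 2 := abs_le.2 ⟨by linarith, by linarith [sq_nonneg ‖y‖]⟩
  calc ‖(1 - ‖y‖ ^ 2) ^ k * (1 + ‖y‖ ^ 2) ^ (-s)‖
      = |1 - ‖y‖ ^ 2| ^ k * (1 + ‖y‖ ^ 2) ^ (-s) := by
        rw [norm_mul, norm_pow, Real.norm_eq_abs, norm_of_nonneg (by positivity)]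
    _ ≤ (1 + ‖y‖ ^ 2) ^ (k : ℝ) * (1 + ‖y‖ ^ 2) ^ (-s) := by
        rw [rpow_natCast]; gcongr
    _ = (1 + ‖y‖ ^ 2) ^ (-(2 * s - 2 * k) / 2) := by
        rw [← rpow_add hpos]; ring_nf

lemma integral_one_sub_norm_sq_mul_rpow (hd : 0 < finrank ℝ E) :
    ∫ y, (1 - ‖y‖ ^ 2) * (1 + ‖y‖ ^ 2) ^ (-((finrank ℝ E : ℝ) / 2 + 2)) ∂μ
      = μ.real (ball 0 1) * ((2 - finrank ℝ E) / (finrank ℝ E + 2)) := by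
  set d := finrank ℝ E
  have : Nontrivial E := Module.nontrivial_of_finrank_pos hd
  set f : ℝ → ℝ := fun r => (1 - r ^ 2) * (1 + r ^ 2) ^ (-((d : ℝ) / 2 + 2))
  have hint : Integrable (fun y : E => f ‖y‖) μ := by
    simpa [f] using integrable_one_sub_norm_sq_pow_mul_rpow (μ := μ) 1 (s := (d : ℝ) / 2 + 2)
      (by linarith)
  rw [integral_fun_norm_addHaar μ f]
  simp only [smul_eq_mul, nsmul_eq_mul]
  rw [integral_Ioi_pow_mul_one_sub_sq_mul_rpow hd
    (by simpa only [smul_eq_mul] using (integrable_fun_norm_addHaar μ).1 hint)]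
  have : (d : ℝ) ≠ 0 := by positivity
  field_simp
  ring

lemma integral_one_sub_norm_sq_mul_rpow_neg (hd : 2 < finrank ℝ E) :
    ∫ y, (1 - ‖y‖ ^ 2) * (1 + ‖y‖ ^ 2) ^ (-((finrank ℝ E : ℝ) / 2 + 2)) ∂μ < 0 := by
  have hd' : (2 : ℝ) < finrank ℝ E := by exact_mod_cast hd
  rw [integral_one_sub_norm_sq_mul_rpow (by omega)]
  exact mul_neg_of_pos_of_neg
    (ENNReal.toReal_pos (measure_ball_pos μ 0 one_pos).ne' measure_ball_lt_top.ne)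
    (div_neg_of_neg_of_pos (by linarith) (by linarith))

lemma integral_one_sub_norm_sq_sq_mul_rpow_pos {s : ℝ} (hs : finrank ℝ E + 4 < 2 * s) :
    0 < ∫ y, (1 - ‖y‖ ^ 2) ^ 2 * (1 + ‖y‖ ^ 2) ^ (-s) ∂μ := by
  refine integral_pos_of_integrable_nonneg_nonzero (x := 0) ?_
    (integrable_one_sub_norm_sq_pow_mul_rpow 2 (by push_cast; linarith)) (fun y => ?_) (by simp)
  · exact Continuous.mul (by fun_prop)
      (Continuous.rpow_const (by fun_prop) fun y => Or.inl (by positivity))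
  · have : 0 ≤ (1 + ‖y‖ ^ 2) ^ (-s) := rpow_nonneg (by positivity) _
    simp only [Pi.zero_apply]; positivity

end Radial

section Bubble

variable {E : Type*} [NormedAddCommGroup E]

lemma rpow_eq_of_eq_bubble {U : E → ℝ} {α c : ℝ} (hα : 0 ≤ α)
    (hU : ∀ y, U y = α * (1 / (1 + ‖y‖ ^ 2)) ^ c) (q : ℝ) (y : E) :
    U y ^ q = α ^ q * (1 + ‖y‖ ^ 2) ^ (-(c * q)) := by
  have hpos : 0 < 1 + ‖y‖ ^ 2 := by positivity
  rw [hU, mul_rpow hα (by positivity), one_div, inv_rpow hpos.le, ← rpow_neg hpos.le,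
    ← rpow_mul hpos.le, neg_mul]

variable [InnerProductSpace ℝ E]

lemma hasFDerivAt_one_add_norm_sq_rpow (c : ℝ) (y : E) :
    HasFDerivAt (fun y : E => (1 + ‖y‖ ^ 2) ^ c)
      ((2 * c * (1 + ‖y‖ ^ 2) ^ (c - 1)) • innerSL ℝ y) y := by
  have hpos : 0 < 1 + ‖y‖ ^ 2 := by positivity
  convert ((hasStrictFDerivAt_norm_sq y).hasFDerivAt.const_add 1).rpow_const (p := c)
    (Or.inl hpos.ne') using 1
  ext z
  simp only [smul_apply, innerSL_apply_apply, smul_eq_mul, nsmul_eq_mul]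
  push_cast
  ring

variable [CompleteSpace E]

/-- `c U + y·∇U = d/dλ|_{λ=1} λ^c U(λ y)` is the dilation generator `Z_{n+1}` when `c = (n-2)/2`. -/
lemma dilation_eq_of_eq_bubble {U : E → ℝ} {α c : ℝ}
    (hU : ∀ y, U y = α * (1 / (1 + ‖y‖ ^ 2)) ^ c) (y : E) :
    c * U y + ⟪y, gradient U y⟫ = α * c * ((1 - ‖y‖ ^ 2) * (1 + ‖y‖ ^ 2) ^ (-(c + 1))) := by
  have hpos : 0 < 1 + ‖y‖ ^ 2 := by positivity
  have hU' : U = fun y => α * (1 + ‖y‖ ^ 2) ^ (-c) := by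
    ext y
    rw [hU, one_div, inv_rpow (by positivity), ← rpow_neg (by positivity)]
  subst hU'
  rw [inner_gradient_right, ((hasFDerivAt_one_add_norm_sq_rpow (-c) y).const_mul α).fderiv]
  simp only [smul_apply, innerSL_apply_apply, real_inner_self_eq_norm_sq,
    smul_eq_mul, conj_trivial]
  rw [show -c = -(c + 1) + 1 by ring, rpow_add_one hpos.ne',
    show -(c + 1) + 1 - 1 = -(c + 1) by ring]
  ring

lemma rpow_mul_dilation_pow_eq_of_eq_bubble {U : E → ℝ} {α c : ℝ} (hα : 0 ≤ α)
    (hU : ∀ y, U y = α * (1 / (1 + ‖y‖ ^ 2)) ^ c) (q : ℝ) (k : ℕ) (y : E) :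
    U y ^ q * (c * U y + ⟪y, gradient U y⟫) ^ k
      = α ^ q * (α * c) ^ k * ((1 - ‖y‖ ^ 2) ^ k * (1 + ‖y‖ ^ 2) ^ (-(c * q + k * (c + 1)))) := by
  have hpos : 0 < 1 + ‖y‖ ^ 2 := by positivity
  rw [rpow_eq_of_eq_bubble hα hU, dilation_eq_of_eq_bubble hU, mul_pow, mul_pow, mul_pow,
    ← rpow_mul_natCast hpos.le, show -(c * q + k * (c + 1)) = -(c * q) + -(c + 1) * k by ring,
    rpow_add hpos]
  ring

end Bubble

/-- `U^{p-1} Z_{n+1}` and `U^{p-1} Z_{n+1}²` are integrable on `ℝⁿ`, and the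
constants `c₁ = -p ∫ U^{p-1} Z_{n+1}` and `c₂ = ∫ U^{p-1} Z_{n+1}²` are strictly positive
(in particular `∫ U^{p-1} Z_{n+1} < 0`). -/
theorem bubble_integral_constants_positive (n : ℕ) (hn : 3 ≤ n)
    (p : ℝ) (hp : p = (n + 2 : ℝ) / (n - 2))
    (αn : ℝ) (hα : αn = ((n : ℝ) * (n - 2)) ^ ((n - 2 : ℝ) / 4))
    (U : EuclideanSpace ℝ (Fin n) → ℝ)
    (hU : ∀ y, U y = αn * (1 / (1 + ‖y‖ ^ 2)) ^ ((n - 2 : ℝ) / 2))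
    (Zn1 : EuclideanSpace ℝ (Fin n) → ℝ)
    (hZn1 : ∀ y, Zn1 y = ((n - 2 : ℝ) / 2) * U y + ⟪y, gradient U y⟫) :
    Integrable (fun y => U y ^ (p - 1) * Zn1 y) ∧
    Integrable (fun y => U y ^ (p - 1) * (Zn1 y) ^ 2) ∧
    0 < -p * ∫ y, U y ^ (p - 1) * Zn1 y ∧
    0 < ∫ y, U y ^ (p - 1) * (Zn1 y) ^ 2 ∧
    (∫ y, U y ^ (p - 1) * Zn1 y) < 0 := by
  have hn' : (3 : ℝ) ≤ n := by exact_mod_cast hn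
  have hd : finrank ℝ (EuclideanSpace ℝ (Fin n)) = n := finrank_euclideanSpace_fin
  have hα0 : 0 < αn := hα ▸ rpow_pos_of_pos (by nlinarith) _
  have hcq : (n - 2 : ℝ) / 2 * (p - 1) = 2 := by
    rw [hp]; field_simp [show (n : ℝ) - 2 ≠ 0 by linarith]; ring
  have hconst (k : ℕ) : 0 < αn ^ (p - 1) * (αn * ((n - 2 : ℝ) / 2)) ^ k := by
    have := mul_pos hα0 (by linarith : (0 : ℝ) < (n - 2) / 2); positivity
  have hprofile (k : ℕ) : (fun y => U y ^ (p - 1) * Zn1 y ^ k) = fun y =>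
      αn ^ (p - 1) * (αn * ((n - 2 : ℝ) / 2)) ^ k
        * ((1 - ‖y‖ ^ 2) ^ k * (1 + ‖y‖ ^ 2) ^ (-(k * ((n : ℝ) / 2) + 2))) := by
    ext y
    rw [hZn1, rpow_mul_dilation_pow_eq_of_eq_bubble hα0.le hU, hcq]
    ring_nf
  have hprofile₁ := hprofile 1
  simp only [pow_one, Nat.cast_one, one_mul] at hprofile₁
  have hneg : ∫ y, U y ^ (p - 1) * Zn1 y < 0 := by
    have h := integral_one_sub_norm_sq_mul_rpow_neg
      (μ := (volume : Measure (EuclideanSpace ℝ (Fin n)))) (by omega)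
    rw [hd] at h
    rw [hprofile₁, integral_const_mul]
    exact mul_neg_of_pos_of_neg (by simpa using hconst 1) h
  have hp0 : 0 < p := hp ▸ div_pos (by linarith) (by linarith)
  refine ⟨hprofile₁ ▸ ?_, hprofile 2 ▸ (integrable_one_sub_norm_sq_pow_mul_rpow 2 ?_).const_mul _,
    mul_pos_of_neg_of_neg (neg_neg_of_pos hp0) hneg, ?_, hneg⟩
  · simpa only [pow_one] using
      (integrable_one_sub_norm_sq_pow_mul_rpow 1 (by rw [hd]; push_cast; linarith)).const_mul _
  · rw [hd]; push_cast; linarith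
  · rw [hprofile 2, integral_const_mul]
    exact mul_pos (hconst 2)
      (integral_one_sub_norm_sq_sq_mul_rpow_pos (by rw [hd]; push_cast; linarith))
end

section
/- Let k ≥ 1, let A be a symmetric positive definite real k×k matrix, and let c > 0. Then there exists exactly one vector Λ ∈ ℝᵏ with Λ_j > 0 for all j = 1,…,k such that Λ_j · (AΛ)_j = c for every j = 1,…,k (where (AΛ)_j denotes the j-th component of the matrix-vector product). In particular, the balancing system b_j^{n−3} H(q_j,q_j) − Σ_{i≠j} b_j^{(n−2)/2−1} b_i^{(n−2)/2} G(q_j,q_i) = (2/(n−2))·(1/b_j) for the positive scaling constants b_j has a unique positive solution whenever the matrix 𝒢(q) (diagonal H(q_j,q_j), off-diagonal −G(q_i,q_j)) is positive definite, via Λ_j = b_j^{(n−2)/2}, A = 𝒢(q), c = 2/(n−2). -/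
/-!
In the coordinates `Λ = exp ∘ x` the system is the critical-point equation of
`E(x) = Λ ⬝ᵥ A *ᵥ Λ - 2c ∑ⱼ xⱼ`. Positive definiteness gives `α > 0` with
`E(x) ≥ ∑ⱼ (α e^{2xⱼ} - 2c xⱼ)`, and each summand tends to `+∞` as `|xⱼ| → ∞`, so `E` is coercive
and attains a global minimum, which solves the system. For uniqueness, if `Λ` and `M` are positive
solutions then `Λⱼ Mⱼ (Λⱼ - Mⱼ)((AΛ)ⱼ - (AM)ⱼ) = -c (Λⱼ - Mⱼ)² ≤ 0`, and summing over `j` gives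
`(Λ - M) ⬝ᵥ A *ᵥ (Λ - M) ≤ 0`.
-/

open Matrix Filter Topology Real

theorem exists_pos_mul_norm_sq_le_of_homogeneous {E : Type*} [NormedAddCommGroup E]
    [NormedSpace ℝ E] [FiniteDimensional ℝ E] {q : E → ℝ} (hq : Continuous q)
    (hpos : ∀ v ≠ 0, 0 < q v) (hsmul : ∀ (t : ℝ) v, q (t • v) = t ^ 2 * q v) :
    ∃ α > 0, ∀ v, α * ‖v‖ ^ 2 ≤ q v := by
  have hq0 : q 0 = 0 := by simpa using hsmul 0 0
  rcases subsingleton_or_nontrivial E with hE | hE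
  · exact ⟨1, one_pos, fun v => by simp [Subsingleton.elim v 0, hq0]⟩
  obtain ⟨u, hu, hmin⟩ := (isCompact_sphere (0 : E) 1).exists_isMinOn
    (NormedSpace.sphere_nonempty.mpr zero_le_one) hq.continuousOn
  refine ⟨q u, hpos u (ne_zero_of_mem_unit_sphere ⟨u, hu⟩), fun v => ?_⟩
  rcases eq_or_ne v 0 with rfl | hv
  · simp [hq0]
  have hv' : 0 < ‖v‖ := norm_pos_iff.mpr hv
  have hle : q u ≤ q (‖v‖⁻¹ • v) := hmin (by simp [norm_smul, hv'.ne'])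
  rwa [hsmul, inv_pow, inv_mul_eq_div, le_div_iff₀ (by positivity)] at hle

section Matrix

variable {ι : Type*} [Fintype ι]

theorem Matrix.PosDef.exists_pos_mul_dotProduct_self_le {A : Matrix ι ι ℝ} (hA : A.PosDef) :
    ∃ α > 0, ∀ v, α * (v ⬝ᵥ v) ≤ v ⬝ᵥ A *ᵥ v := by
  obtain ⟨α, hα, hle⟩ := exists_pos_mul_norm_sq_le_of_homogeneous
    (q := fun v : EuclideanSpace ℝ ι => v.ofLp ⬝ᵥ A *ᵥ v.ofLp) (by fun_prop)
    (fun v hv => by simpa using hA.dotProduct_mulVec_pos (x := v.ofLp) (by simpa using hv))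
    (fun t v => by
      simp only [WithLp.ofLp_smul, mulVec_smul, dotProduct_smul, smul_dotProduct, smul_eq_mul]
      ring)
  refine ⟨α, hα, fun v => ?_⟩
  have hv := hle (WithLp.toLp 2 v)
  rw [EuclideanSpace.norm_sq_eq] at hv
  simpa [dotProduct, sq] using hv

theorem Matrix.IsSymm.dotProduct_mulVec_add_single {R : Type*} [CommRing R] [DecidableEq ι]
    {A : Matrix ι ι R} (hA : A.IsSymm) (v : ι → R) (j : ι) (u : R) :
    (v + Pi.single j u) ⬝ᵥ A *ᵥ (v + Pi.single j u)
      = v ⬝ᵥ A *ᵥ v + 2 * u * (A *ᵥ v) j + u ^ 2 * A j j := by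
  have hvec : v ᵥ* A = A *ᵥ v := by rw [← vecMul_transpose, hA.eq]
  simp only [mulVec_add, add_dotProduct, dotProduct_add, single_dotProduct, dotProduct_mulVec v,
    hvec, dotProduct_single]
  simp only [mulVec_single, Pi.smul_apply, col_apply, MulOpposite.smul_eq_mul_unop,
    MulOpposite.unop_op]
  ring

theorem Matrix.PosDef.eq_of_pos_of_mul_mulVec_eq {A : Matrix ι ι ℝ} (hA : A.PosDef) {c : ℝ}
    (hc : 0 ≤ c) {Λ M : ι → ℝ} (hΛ : ∀ j, 0 < Λ j) (hM : ∀ j, 0 < M j)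
    (hΛc : ∀ j, Λ j * (A *ᵥ Λ) j = c) (hMc : ∀ j, M j * (A *ᵥ M) j = c) : Λ = M := by
  by_contra hne
  have hpos : 0 < (Λ - M) ⬝ᵥ A *ᵥ (Λ - M) := by
    simpa using hA.dotProduct_mulVec_pos (sub_ne_zero.mpr hne)
  have hterm : ∀ j, (Λ j - M j) * ((A *ᵥ Λ) j - (A *ᵥ M) j) ≤ 0 := by
    intro j
    have hscaled : Λ j * M j * ((Λ j - M j) * ((A *ᵥ Λ) j - (A *ᵥ M) j))
        = -(c * (Λ j - M j) ^ 2) := by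
      linear_combination (Λ j - M j) * M j * hΛc j - (Λ j - M j) * Λ j * hMc j
    refine le_of_mul_le_mul_left ?_ (mul_pos (hΛ j) (hM j))
    rw [hscaled, mul_zero, neg_nonpos]
    positivity
  have hnonpos : (Λ - M) ⬝ᵥ A *ᵥ (Λ - M) ≤ 0 := by
    rw [mulVec_sub]
    exact Finset.sum_nonpos fun j _ => hterm j
  linarith

end Matrix

theorem tendsto_sum_comp_cocompact_atTop {ι X : Type*} [Fintype ι] [TopologicalSpace X]
    {g : X → ℝ} (hbdd : BddBelow (Set.range g)) (hg : Tendsto g (cocompact X) atTop) :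
    Tendsto (fun x : ι → X => ∑ i, g (x i)) (cocompact (ι → X)) atTop := by
  classical
  obtain ⟨m, hm⟩ := hbdd
  rw [← coprodᵢ_cocompact, Filter.coprodᵢ, tendsto_iSup]
  intro i
  refine tendsto_atTop_mono (fun x => ?_)
    (tendsto_atTop_add_const_right _ ((Finset.univ.erase i).card • m) (hg.comp tendsto_comap))
  rw [← Finset.add_sum_erase _ _ (Finset.mem_univ i)]
  exact add_le_add_right (Finset.card_nsmul_le_sum _ _ _ fun l _ => hm ⟨x l, rfl⟩) _

section ExpSquare

variable {α c : ℝ}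

theorem bddBelow_range_mul_exp_sq_sub_mul (hα : 0 < α) (hc : 0 ≤ c) :
    BddBelow (Set.range fun s => α * exp s ^ 2 - 2 * c * s) := by
  refine ⟨-c ^ 2 / α, ?_⟩
  rintro _ ⟨s, rfl⟩
  have hs : s ≤ exp s := by linarith [add_one_le_exp s]
  show -c ^ 2 / α ≤ α * exp s ^ 2 - 2 * c * s
  rw [div_le_iff₀ hα]
  nlinarith [sq_nonneg (α * exp s - c),
    mul_le_mul_of_nonneg_left hs (by positivity : 0 ≤ 2 * c * α)]

theorem tendsto_mul_exp_sq_sub_mul_cocompact (hα : 0 < α) (hc : 0 < c) :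
    Tendsto (fun s => α * exp s ^ 2 - 2 * c * s) (cocompact ℝ) atTop := by
  rw [cocompact_eq_atBot_atTop, tendsto_sup]
  constructor
  · refine tendsto_atTop_mono (fun s => ?_)
      (tendsto_neg_atBot_atTop.const_mul_atTop (by positivity : 0 < 2 * c))
    nlinarith [sq_nonneg (exp s)]
  · refine tendsto_atTop_mono' _ ?_ tendsto_exp_atTop
    filter_upwards [tendsto_exp_atTop.eventually_ge_atTop ((2 * c + 1) / α)] with s hs
    rw [div_le_iff₀ hα] at hs
    have hs' : s ≤ exp s := by linarith [add_one_le_exp s]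
    nlinarith [mul_le_mul_of_nonneg_left hs (exp_pos s).le]

end ExpSquare

section BalancingEnergy

variable {ι : Type*} [Fintype ι]

/-- The functional `Λ ⬝ᵥ A *ᵥ Λ - 2c ∑ⱼ log Λⱼ` in the coordinates `Λ = exp ∘ x`, which identify
`ι → ℝ` with the open positive orthant. -/
noncomputable def balancingEnergy (A : Matrix ι ι ℝ) (c : ℝ) (x : ι → ℝ) : ℝ :=
  (exp ∘ x) ⬝ᵥ A *ᵥ (exp ∘ x) - 2 * c * ∑ i, x i

variable {A : Matrix ι ι ℝ} {c : ℝ}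

theorem continuous_balancingEnergy : Continuous (balancingEnergy A c) := by
  unfold balancingEnergy
  fun_prop

theorem tendsto_balancingEnergy_cocompact (hA : A.PosDef) (hc : 0 < c) :
    Tendsto (balancingEnergy A c) (cocompact (ι → ℝ)) atTop := by
  obtain ⟨α, hα, hcoer⟩ := hA.exists_pos_mul_dotProduct_self_le
  refine tendsto_atTop_mono (fun x => ?_) (tendsto_sum_comp_cocompact_atTop
    (bddBelow_range_mul_exp_sq_sub_mul hα hc.le) (tendsto_mul_exp_sq_sub_mul_cocompact hα hc))
  have hx := hcoer (exp ∘ x)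
  simp only [balancingEnergy, Finset.sum_sub_distrib, ← Finset.mul_sum]
  simp only [dotProduct, Function.comp_apply, sq] at hx ⊢
  linarith

theorem exp_mul_mulVec_exp_eq_of_isLocalMin (hA : A.IsSymm) {x : ι → ℝ}
    (hx : IsLocalMin (balancingEnergy A c) x) (j : ι) : exp (x j) * (A *ᵥ (exp ∘ x)) j = c := by
  classical
  set b := (A *ᵥ (exp ∘ x)) j
  set u : ℝ → ℝ := fun t => exp (x j + t) - exp (x j)
  have hline : (balancingEnergy A c ∘ fun t : ℝ => x + Pi.single j t) = fun t =>
      (exp ∘ x) ⬝ᵥ A *ᵥ (exp ∘ x) + 2 * u t * b + u t ^ 2 * A j j - 2 * c * (∑ i, x i + t) := by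
    ext t
    have hexp : exp ∘ (x + Pi.single j t) = exp ∘ x + Pi.single j (u t) := by
      ext i; rcases eq_or_ne i j with rfl | hij <;> simp [u, *]
    simp only [Function.comp_apply, balancingEnergy, hexp, hA.dotProduct_mulVec_add_single]
    simp [b, Finset.sum_add_distrib]
  have hmin : IsLocalMin (balancingEnergy A c ∘ fun t : ℝ => x + Pi.single j t) 0 :=
    IsLocalMin.comp_continuous (by simpa using hx)
      (continuous_const.add (continuous_single j)).continuousAt
  have hu : HasDerivAt u (exp (x j)) 0 :=
    (((hasDerivAt_id 0).const_add (x j)).exp.sub_const _).congr_deriv (by simp)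
  have hderiv : HasDerivAt (balancingEnergy A c ∘ fun t : ℝ => x + Pi.single j t)
      (2 * (exp (x j) * b - c)) 0 := by
    rw [hline]
    refine (((((hu.const_mul 2).mul_const b).const_add _).add
      ((hu.pow 2).mul_const (A j j))).sub
      (((hasDerivAt_id 0).const_add (∑ i, x i)).const_mul (2 * c))).congr_deriv ?_
    simp only [u, add_zero, sub_self, mul_one]
    ring
  linarith [hmin.hasDerivAt_eq_zero hderiv]

theorem Matrix.PosDef.existsUnique_pos_mul_mulVec_eq (hA : A.PosDef) (hc : 0 < c) :
    ∃! Λ : ι → ℝ, (∀ j, 0 < Λ j) ∧ ∀ j, Λ j * (A *ᵥ Λ) j = c := by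
  obtain ⟨x, hx⟩ :=
    continuous_balancingEnergy.exists_forall_le (tendsto_balancingEnergy_cocompact hA hc)
  have hsymm : A.IsSymm := by simpa using hA.isHermitian
  have hsol : ∀ j, (exp ∘ x) j * (A *ᵥ (exp ∘ x)) j = c :=
    exp_mul_mulVec_exp_eq_of_isLocalMin hsymm (Eventually.of_forall hx)
  exact ⟨exp ∘ x, ⟨fun j => exp_pos (x j), hsol⟩, fun M ⟨hMpos, hMc⟩ =>
    hA.eq_of_pos_of_mul_mulVec_eq hc.le hMpos (fun j => exp_pos (x j)) hMc hsol⟩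

end BalancingEnergy

theorem unique_positive_solution_of_balancing_system_general (k : ℕ)
    (A : Matrix (Fin k) (Fin k) ℝ) (hA : A.PosDef) (c : ℝ) (hc : 0 < c) :
    ∃! Λ : Fin k → ℝ, (∀ j, 0 < Λ j) ∧ ∀ j, Λ j * A.mulVec Λ j = c :=
  hA.existsUnique_pos_mul_mulVec_eq hc

/-- for a symmetric positive definite real `k×k` matrix `A` and `c > 0`, there
is exactly one vector `Λ` with all entries positive such that `Λ_j (AΛ)_j = c` for every `j`.
(This is the balancing system for the scaling constants `b_j`, via `Λ_j = b_j^{(n-2)/2}`,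
`A = 𝒢(q)`, `c = 2/(n-2)`.) -/
theorem unique_positive_solution_of_balancing_system (k : ℕ) (hk : 1 ≤ k)
    (A : Matrix (Fin k) (Fin k) ℝ) (hA : A.PosDef) (c : ℝ) (hc : 0 < c) :
    ∃! Λ : Fin k → ℝ, (∀ j, 0 < Λ j) ∧ ∀ j, Λ j * A.mulVec Λ j = c :=
  unique_positive_solution_of_balancing_system_general k A hA c hc
end

section
/- Let n ≥ 3, let a ∈ (−n, −2) (so that the exponent γ = a + 2 satisfies 2 − n < γ < 0), and let e ∈ ℝⁿ. Suppose φ : ℝⁿ × (−∞, 0] → ℝ is continuous, is C² in the space variable and C¹ in the time variable on (ℝⁿ ∖ {e}) × (−∞, 0], satisfies the heat equation ∂φ/∂t (y,t) = Δ_y φ(y,t) for all y ≠ e and t ≤ 0, and satisfies the pointwise bound |φ(y,t)| ≤ |y − e|^{a+2} for all y ∈ ℝⁿ ∖ {e} and t ≤ 0. Then φ is identically zero. -/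
/-!
On the annular cylinder `{r ≤ |y - e| ≤ R} × [T, t₀]` the function
`B = r^(a+n) |y - e|^(2-n) + R^(a+2) + M (R² - |y - e|² + 2n (t₀ - t))`,
`M = r^(a+2) / (2n (t₀ - T))`, solves the heat equation and dominates `|y - e|^(a+2) ≥ φ` on the
parabolic boundary, so the maximum principle gives `φ ≤ B`. At a point `(y, t₀)` let `T → -∞`,
then `r → 0` (as `a + n > 0`) and `R → ∞` (as `a + 2 < 0`): `φ ≤ 0` off `e`. The same applies
to `-φ`, and continuity covers `y = e`.
-/

open Real Set

noncomputable def lap {n : ℕ} (f : EuclideanSpace ℝ (Fin n) → ℝ)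
    (x : EuclideanSpace ℝ (Fin n)) : ℝ :=
  ∑ i : Fin n,
    fderiv ℝ (fun y => fderiv ℝ f y (EuclideanSpace.single i 1)) x (EuclideanSpace.single i 1)

open Filter Topology

/-- If `L > 0`, the second derivative test would make `x` a local minimum as well, so `h` would be
locally constant and `L = 0`. -/
theorem IsLocalMax.nonpos_of_hasDerivAt_of_hasDerivAt {h h' : ℝ → ℝ} {x L : ℝ}
    (hmax : IsLocalMax h x) (hh : ∀ᶠ s in 𝓝 x, HasDerivAt h (h' s) s)
    (hh' : HasDerivAt h' L x) : L ≤ 0 := by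
  have hderiv : deriv h =ᶠ[𝓝 x] h' := hh.mono fun s hs => hs.deriv
  have hL : deriv (deriv h) x = L := (hh'.congr_of_eventuallyEq hderiv).deriv
  by_contra! hpos
  have hmin : IsLocalMin h x := isLocalMin_of_deriv_deriv_pos (hL ▸ hpos) hmax.deriv_eq_zero
    hh.self_of_nhds.continuousAt
  have hconst : h =ᶠ[𝓝 x] fun _ => h x := (hmin.and hmax).mono fun s hs => le_antisymm hs.2 hs.1
  have hderiv0 : deriv h =ᶠ[𝓝 x] fun _ => 0 :=
    hconst.eventuallyEq_nhds.mono fun s hs => by rw [hs.deriv_eq, deriv_const]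
  rw [hderiv0.deriv_eq, deriv_const] at hL
  exact hpos.ne hL

theorem IsMaxOn.nonneg_of_hasDerivWithinAt_Icc {u : ℝ → ℝ} {T t d : ℝ} (hT : T < t)
    (hd : HasDerivWithinAt u d (Icc T t) t) (hmax : IsMaxOn u (Icc T t) t) : 0 ≤ d := by
  have hcone : T - t ∈ posTangentConeAt (Icc T t) t :=
    sub_mem_posTangentConeAt_of_segment_subset (segment_eq_Icc' t T ▸ by simp [hT.le])
  have : (T - t) * d ≤ 0 := by
    simpa using hmax.localize.hasFDerivWithinAt_nonpos hd.hasFDerivWithinAt hcone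
  exact nonneg_of_mul_nonpos_right this (sub_neg.2 hT)

section Line

variable {E : Type*} [NormedAddCommGroup E] [NormedSpace ℝ E]

theorem hasDerivAt_line (x v : E) (s : ℝ) : HasDerivAt (fun s : ℝ => x + s • v) v s := by
  simpa using ((hasDerivAt_id s).smul_const v).const_add x

variable {f : E → ℝ} {x : E}

theorem ContDiffAt.eventually_hasDerivAt_line (hf : ContDiffAt ℝ 2 f x) (v : E) :
    ∀ᶠ s in 𝓝 (0 : ℝ), HasDerivAt (fun s => f (x + s • v)) (fderiv ℝ f (x + s • v) v) s := by
  have hline : Tendsto (fun s : ℝ => x + s • v) (𝓝 0) (𝓝 x) := by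
    simpa using (hasDerivAt_line x v 0).continuousAt.tendsto
  filter_upwards [hline.eventually (hf.eventually (by simp))] with s hs
  exact (hs.differentiableAt (by simp)).hasFDerivAt.comp_hasDerivAt s (hasDerivAt_line x v s)

theorem ContDiffAt.hasDerivAt_fderiv_line (hf : ContDiffAt ℝ 2 f x) (v : E) :
    HasDerivAt (fun s : ℝ => fderiv ℝ f (x + s • v) v)
      (fderiv ℝ (fun y => fderiv ℝ f y v) x v) 0 := by
  have hd : DifferentiableAt ℝ (fun y => fderiv ℝ f y v) x :=
    ((hf.fderiv_right (m := 1) (by norm_num)).differentiableAt (by simp)).clm_apply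
      (differentiableAt_const v)
  exact hd.hasFDerivAt.comp_hasDerivAt_of_eq 0 (hasDerivAt_line x v 0) (by simp)

end Line

section Radial

variable {E : Type*} [NormedAddCommGroup E] [InnerProductSpace ℝ E]

theorem hasDerivAt_normSq_line (x e v : E) (s : ℝ) :
    HasDerivAt (fun s : ℝ => ‖x + s • v - e‖ ^ 2) (2 * inner ℝ (x + s • v - e) v) s :=
  ((hasDerivAt_line x v s).sub_const e).norm_sq

variable {F F' : ℝ → ℝ} {F'' : ℝ} {x e : E}

theorem eventually_hasDerivAt_radial_line (hF : ∀ᶠ q in 𝓝 (‖x - e‖ ^ 2), HasDerivAt F (F' q) q)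
    (v : E) :
    ∀ᶠ s in 𝓝 (0 : ℝ), HasDerivAt (fun s => F (‖x + s • v - e‖ ^ 2))
      (F' (‖x + s • v - e‖ ^ 2) * (2 * inner ℝ (x + s • v - e) v)) s := by
  have hq : Tendsto (fun s : ℝ => ‖x + s • v - e‖ ^ 2) (𝓝 0) (𝓝 (‖x - e‖ ^ 2)) := by
    simpa using (hasDerivAt_normSq_line x e v 0).continuousAt.tendsto
  filter_upwards [hq.eventually hF] with s hs
  exact hs.comp s (hasDerivAt_normSq_line x e v s)

theorem hasDerivAt_radial_line_deriv (hF' : HasDerivAt F' F'' (‖x - e‖ ^ 2)) (v : E) :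
    HasDerivAt (fun s : ℝ => F' (‖x + s • v - e‖ ^ 2) * (2 * inner ℝ (x + s • v - e) v))
      (F'' * (2 * inner ℝ (x - e) v) ^ 2 + F' (‖x - e‖ ^ 2) * (2 * ‖v‖ ^ 2)) 0 := by
  have hF'q : HasDerivAt (fun s : ℝ => F' (‖x + s • v - e‖ ^ 2))
      (F'' * (2 * inner ℝ (x - e) v)) 0 := by
    rw [show ‖x - e‖ ^ 2 = ‖x + (0 : ℝ) • v - e‖ ^ 2 by simp] at hF'
    exact (hF'.comp 0 (hasDerivAt_normSq_line x e v 0)).congr_deriv (by simp)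
  have hinner : HasDerivAt (fun s : ℝ => 2 * inner ℝ (x + s • v - e) v) (2 * ‖v‖ ^ 2) 0 := by
    simpa [real_inner_self_eq_norm_sq] using
      (((hasDerivAt_line x v 0).sub_const e).inner ℝ (hasDerivAt_const (0 : ℝ) v)).const_mul 2
  exact (hF'q.mul hinner).congr_deriv (by simp; ring)

end Radial

theorem lap_le_of_isLocalMax_sub_radial {n : ℕ} {f : EuclideanSpace ℝ (Fin n) → ℝ}
    {F F' : ℝ → ℝ} {F'' : ℝ} {x e : EuclideanSpace ℝ (Fin n)} (hf : ContDiffAt ℝ 2 f x)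
    (hF : ∀ᶠ q in 𝓝 (‖x - e‖ ^ 2), HasDerivAt F (F' q) q) (hF' : HasDerivAt F' F'' (‖x - e‖ ^ 2))
    (hmax : IsLocalMax (fun y => f y - F (‖y - e‖ ^ 2)) x) :
    lap f x ≤ 4 * ‖x - e‖ ^ 2 * F'' + 2 * n * F' (‖x - e‖ ^ 2) := by
  have hterm : ∀ i : Fin n, fderiv ℝ (fun y => fderiv ℝ f y (EuclideanSpace.single i 1)) x
      (EuclideanSpace.single i 1) ≤ F'' * (2 * (x - e) i) ^ 2 + F' (‖x - e‖ ^ 2) * 2 := by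
    intro i
    set v : EuclideanSpace ℝ (Fin n) := EuclideanSpace.single i 1
    have hline : IsLocalMax (fun s : ℝ => f (x + s • v) - F (‖x + s • v - e‖ ^ 2)) 0 :=
      IsLocalMax.comp_continuous (f := fun y => f y - F (‖y - e‖ ^ 2))
        (g := fun s : ℝ => x + s • v) (by simpa using hmax) (hasDerivAt_line x v 0).continuousAt
    have := hline.nonpos_of_hasDerivAt_of_hasDerivAt
      (((hf.eventually_hasDerivAt_line v).and (eventually_hasDerivAt_radial_line hF v)).mono
        fun s hs => hs.1.sub hs.2)
      ((hf.hasDerivAt_fderiv_line v).sub (hasDerivAt_radial_line_deriv hF' v))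
    simpa [v, EuclideanSpace.inner_single_right] using this
  calc lap f x ≤ ∑ i : Fin n, (F'' * (2 * (x - e) i) ^ 2 + F' (‖x - e‖ ^ 2) * 2) :=
        Finset.sum_le_sum fun i _ => hterm i
    _ = 4 * ‖x - e‖ ^ 2 * F'' + 2 * n * F' (‖x - e‖ ^ 2) := by
        simp only [Finset.sum_add_distrib, mul_pow, EuclideanSpace.real_norm_sq_eq,
          ← Finset.mul_sum, Finset.sum_const, Finset.card_univ, Fintype.card_fin, nsmul_eq_mul]
        ring

theorem lap_neg {n : ℕ} (f : EuclideanSpace ℝ (Fin n) → ℝ) (x : EuclideanSpace ℝ (Fin n)) :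
    lap (fun y => -f y) x = -lap f x := by
  simp only [lap, fderiv_fun_neg, neg_apply, Finset.sum_neg_distrib]

section MaximumPrinciple

variable {E : Type*} [TopologicalSpace E] {K U : Set E} {T t₀ : ℝ} {u : E → ℝ → ℝ}

/-- The drift `σ (t - T)` makes the time derivative at an interior maximum of `u - σ (t - T)`
at least `σ > 0`, which `hsub` forbids. -/
theorem sub_mul_nonpos_of_parabolicBoundary (hK : IsCompact K) (hU : IsOpen U) (hUK : U ⊆ K)
    (hcont : ContinuousOn (fun p : E × ℝ => u p.1 p.2) (K ×ˢ Icc T t₀))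
    (hsub : ∀ y ∈ U, ∀ t ∈ Ioc T t₀, IsLocalMax (fun z => u z t) y →
      ∃ d ≤ 0, HasDerivWithinAt (u y) d (Icc T t) t)
    (hbdry : ∀ y ∈ K, ∀ t ∈ Icc T t₀, y ∉ U ∨ t = T → u y t ≤ 0)
    {σ : ℝ} (hσ : 0 < σ) {y : E} (hy : y ∈ K) {t : ℝ} (ht : t ∈ Icc T t₀) :
    u y t - σ * (t - T) ≤ 0 := by
  set w : E × ℝ → ℝ := fun p => u p.1 p.2 - σ * (p.2 - T)
  have hwcont : ContinuousOn w (K ×ˢ Icc T t₀) := hcont.sub (by fun_prop)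
  obtain ⟨⟨ys, ts⟩, ⟨hys, hts⟩, hmax⟩ := (hK.prod isCompact_Icc).exists_isMaxOn
    ⟨(y, t), hy, ht⟩ hwcont
  refine (hmax ⟨hy, ht⟩ : w (y, t) ≤ w (ys, ts)).trans ?_
  by_contra! hpos
  have hdrift : 0 ≤ σ * (ts - T) := mul_nonneg hσ.le (sub_nonneg.2 hts.1)
  have hinterior : ¬(ys ∉ U ∨ ts = T) := fun h => by linarith [hbdry ys hys ts hts h]
  have hysU : ys ∈ U := not_not.1 fun h => hinterior (Or.inl h)
  have hTts : T < ts := lt_of_le_of_ne hts.1 fun h => hinterior (Or.inr h.symm)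
  have hlocal : IsLocalMax (fun z => u z ts) ys :=
    mem_of_superset (hU.mem_nhds hysU) fun z hz => by
      have : w (z, ts) ≤ w (ys, ts) := hmax ⟨hUK hz, hts⟩
      simpa [w] using this
  obtain ⟨d, hd, hderiv⟩ := hsub ys hysU ts ⟨hTts, hts.2⟩ hlocal
  have hdσ : 0 ≤ d - σ := IsMaxOn.nonneg_of_hasDerivWithinAt_Icc hTts
    (hderiv.sub (by simpa using ((hasDerivAt_id ts).sub_const T).const_mul σ |>.hasDerivWithinAt))
    fun s hs => (hmax ⟨hys, hs.1, hs.2.trans hts.2⟩ : w (ys, s) ≤ w (ys, ts))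
  linarith

theorem nonpos_of_parabolicBoundary (hK : IsCompact K) (hU : IsOpen U) (hUK : U ⊆ K)
    (hcont : ContinuousOn (fun p : E × ℝ => u p.1 p.2) (K ×ˢ Icc T t₀))
    (hsub : ∀ y ∈ U, ∀ t ∈ Ioc T t₀, IsLocalMax (fun z => u z t) y →
      ∃ d ≤ 0, HasDerivWithinAt (u y) d (Icc T t) t)
    (hbdry : ∀ y ∈ K, ∀ t ∈ Icc T t₀, y ∉ U ∨ t = T → u y t ≤ 0)
    {y : E} (hy : y ∈ K) {t : ℝ} (ht : t ∈ Icc T t₀) : u y t ≤ 0 := by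
  have hlim : Tendsto (fun σ : ℝ => σ * (t - T)) (𝓝[>] 0) (𝓝 0) := by
    simpa using ((continuous_mul_const (t - T)).tendsto 0).mono_left nhdsWithin_le_nhds
  refine ge_of_tendsto hlim (eventually_nhdsWithin_of_forall fun σ hσ => ?_)
  exact sub_nonpos.1
    (sub_mul_nonpos_of_parabolicBoundary hK hU hUK hcont hsub hbdry hσ hy ht)

end MaximumPrinciple

/-- `ε |y - e|^{2-n} + δ + M (R² - |y - e|² + 2n (t₀ - t))`, written in `q = |y - e|²`: the sum
of a harmonic function and a caloric polynomial, hence a solution of the heat equation off `e`. -/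
noncomputable def heatBarrier (n : ℕ) (ε δ M R t₀ t q : ℝ) : ℝ :=
  ε * q ^ ((2 - n : ℝ) / 2) + δ + M * (R ^ 2 - q + 2 * n * (t₀ - t))

theorem hasDerivAt_heatBarrier_time (n : ℕ) (ε δ M R t₀ t q : ℝ) :
    HasDerivAt (fun t => heatBarrier n ε δ M R t₀ t q) (-(2 * n * M)) t := by
  unfold heatBarrier
  exact ((((hasDerivAt_id t).const_sub t₀).const_mul (2 * n : ℝ) |>.const_add (R ^ 2 - q)
    |>.const_mul M).const_add (ε * q ^ ((2 - n : ℝ) / 2) + δ)).congr_deriv (by ring)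

theorem continuousOn_heatBarrier {E : Type*} [NormedAddCommGroup E] {n : ℕ} {ε δ M R t₀ : ℝ}
    {e : E} {s : Set (E × ℝ)} (hs : ∀ p ∈ s, p.1 ≠ e) :
    ContinuousOn (fun p : E × ℝ => heatBarrier n ε δ M R t₀ p.2 (‖p.1 - e‖ ^ 2)) s := by
  refine ((continuousOn_const.mul (ContinuousOn.rpow_const (by fun_prop) fun p hp => ?_)).add
    continuousOn_const).add (by fun_prop)
  exact Or.inl (pow_ne_zero 2 (norm_ne_zero_iff.2 (sub_ne_zero.2 (hs p hp))))

section HeatBarrier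

variable {n : ℕ} {ε δ M R t₀ t q : ℝ}

theorem hasDerivAt_heatBarrier (hq : 0 < q) :
    HasDerivAt (heatBarrier n ε δ M R t₀ t)
      (ε * ((2 - n : ℝ) / 2) * q ^ ((2 - n : ℝ) / 2 - 1) - M) q := by
  unfold heatBarrier
  exact ((((Real.hasDerivAt_rpow_const (p := (2 - n : ℝ) / 2) (Or.inl hq.ne')).const_mul ε)
    |>.add_const δ).add ((((hasDerivAt_id q).const_sub (R ^ 2)).add_const
      (2 * n * (t₀ - t))).const_mul M)).congr_deriv (by ring)

theorem hasDerivAt_deriv_heatBarrier (hq : 0 < q) :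
    HasDerivAt (fun q => ε * ((2 - n : ℝ) / 2) * q ^ ((2 - n : ℝ) / 2 - 1) - M)
      (ε * ((2 - n : ℝ) / 2) * (((2 - n : ℝ) / 2 - 1) * q ^ ((2 - n : ℝ) / 2 - 1 - 1))) q :=
  ((Real.hasDerivAt_rpow_const (Or.inl hq.ne')).const_mul _).sub_const M

theorem lap_le_of_isLocalMax_sub_heatBarrier {f : EuclideanSpace ℝ (Fin n) → ℝ}
    {x e : EuclideanSpace ℝ (Fin n)} (hf : ContDiffAt ℝ 2 f x) (hx : x ≠ e)
    (hmax : IsLocalMax (fun y => f y - heatBarrier n ε δ M R t₀ t (‖y - e‖ ^ 2)) x) :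
    lap f x ≤ -(2 * n * M) := by
  have hQ : 0 < ‖x - e‖ ^ 2 := pow_pos (norm_pos_iff.2 (sub_ne_zero.2 hx)) 2
  have hF : ∀ᶠ q in 𝓝 (‖x - e‖ ^ 2), HasDerivAt (heatBarrier n ε δ M R t₀ t)
      (ε * ((2 - n : ℝ) / 2) * q ^ ((2 - n : ℝ) / 2 - 1) - M) q :=
    (eventually_gt_nhds hQ).mono fun q hq => hasDerivAt_heatBarrier hq
  refine (lap_le_of_isLocalMax_sub_radial hf hF (hasDerivAt_deriv_heatBarrier hQ) hmax).trans_eq ?_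
  generalize ‖x - e‖ ^ 2 = Q at hQ ⊢
  rw [Real.rpow_sub_one hQ.ne' ((2 - n : ℝ) / 2 - 1)]
  field_simp
  ring

end HeatBarrier

theorem rpow_le_heatBarrier {n : ℕ} (hn : 0 < n) {a r R T t₀ t ρ : ℝ} (ha : a + 2 ≤ 0)
    (hr : 0 < r) (hT : T < t₀) (hρ : ρ ∈ Icc r R) (ht : t ∈ Icc T t₀)
    (hbdry : ρ = r ∨ ρ = R ∨ t = T) :
    ρ ^ (a + 2) ≤ heatBarrier n (r ^ (a + n)) (R ^ (a + 2)) (r ^ (a + 2) / (2 * n * (t₀ - T)))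
      R t₀ t (ρ ^ 2) := by
  set M := r ^ (a + 2) / (2 * n * (t₀ - T))
  have hρ0 : 0 < ρ := hr.trans_le hρ.1
  have hΓ : 0 ≤ r ^ (a + n) * (ρ ^ 2) ^ ((2 - n : ℝ) / 2) := by positivity
  have hδ : 0 < R ^ (a + 2) := Real.rpow_pos_of_pos (hρ0.trans_le hρ.2) _
  have hTt₀ : 0 < t₀ - T := sub_pos.2 hT
  have hM : 0 ≤ M := by positivity
  have hMP : M * (2 * n * (t₀ - t)) ≤ M * (R ^ 2 - ρ ^ 2 + 2 * n * (t₀ - t)) :=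
    mul_le_mul_of_nonneg_left (by nlinarith [hρ.2]) hM
  have hMP0 : 0 ≤ M * (2 * n * (t₀ - t)) := mul_nonneg hM (by have := ht.2; positivity)
  unfold heatBarrier
  rcases hbdry with rfl | rfl | rfl
  · have hcap : ρ ^ (a + n) * (ρ ^ 2) ^ ((2 - n : ℝ) / 2) = ρ ^ (a + 2) := by
      rw [← Real.rpow_natCast ρ 2, ← Real.rpow_mul hr.le, ← Real.rpow_add hr]
      congr 1
      push_cast
      ring
    linarith
  · linarith
  · have hinit : M * (2 * n * (t₀ - t)) = r ^ (a + 2) := by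
      simp only [M]
      field_simp
    linarith [Real.rpow_le_rpow_of_nonpos hr hρ.1 ha]

theorem le_heatBarrier {n : ℕ} (hn : 0 < n) {e : EuclideanSpace ℝ (Fin n)}
    {φ : EuclideanSpace ℝ (Fin n) → ℝ → ℝ} {a r R T t₀ : ℝ}
    (hcont : ContinuousOn (fun q : EuclideanSpace ℝ (Fin n) × ℝ => φ q.1 q.2) (univ ×ˢ Iic 0))
    (hC2 : ∀ t ≤ (0 : ℝ), ContDiffOn ℝ 2 (fun y => φ y t) {e}ᶜ)
    (hheat : ∀ y ≠ e, ∀ t ≤ (0 : ℝ), HasDerivWithinAt (φ y) (lap (fun z => φ z t) y) (Iic 0) t)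
    (hbound : ∀ y ≠ e, ∀ t ≤ (0 : ℝ), φ y t ≤ ‖y - e‖ ^ (a + 2))
    (ha : a + 2 ≤ 0) (hr : 0 < r) (hT : T < t₀) (ht₀ : t₀ ≤ 0)
    {y : EuclideanSpace ℝ (Fin n)} (hry : r ≤ ‖y - e‖) (hyR : ‖y - e‖ ≤ R)
    {t : ℝ} (ht : t ∈ Icc T t₀) :
    φ y t ≤ heatBarrier n (r ^ (a + n)) (R ^ (a + 2)) (r ^ (a + 2) / (2 * n * (t₀ - T))) R t₀ t
      (‖y - e‖ ^ 2) := by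
  set M := r ^ (a + 2) / (2 * n * (t₀ - T))
  set B : EuclideanSpace ℝ (Fin n) → ℝ → ℝ :=
    fun y t => heatBarrier n (r ^ (a + n)) (R ^ (a + 2)) M R t₀ t (‖y - e‖ ^ 2)
  have hne : ∀ {y}, r ≤ ‖y - e‖ → y ≠ e := fun hy h => by
    simp [h] at hy
    linarith
  set K := (fun y => ‖y - e‖) ⁻¹' Icc r R
  set U := (fun y => ‖y - e‖) ⁻¹' Ioo r R
  have hK : IsCompact K := (isCompact_closedBall e R).of_isClosed_subset
    (isClosed_Icc.preimage (by fun_prop)) fun y hy => by simpa [dist_eq_norm] using hy.2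
  have hU : IsOpen U := isOpen_Ioo.preimage (by fun_prop)
  have hUK : U ⊆ K := fun y hy => ⟨hy.1.le, hy.2.le⟩
  have hsub : ∀ y ∈ U, ∀ t ∈ Ioc T t₀,
      IsLocalMax (fun z => φ z t - B z t) y →
        ∃ d ≤ 0, HasDerivWithinAt (fun s => φ y s - B y s) d (Icc T t) t := by
    intro y hy t ht hmax
    have hye : y ≠ e := hne hy.1.le
    have ht0 : t ≤ 0 := ht.2.trans ht₀
    refine ⟨lap (fun z => φ z t) y + 2 * n * M, ?_, ?_⟩
    · linarith [lap_le_of_isLocalMax_sub_heatBarrier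
        ((hC2 t ht0).contDiffAt (isOpen_compl_singleton.mem_nhds hye)) hye hmax]
    · exact (((hheat y hye t ht0).mono fun s hs => hs.2.trans ht0).sub
        (hasDerivAt_heatBarrier_time n _ _ M R t₀ t _).hasDerivWithinAt).congr_deriv
        (sub_neg_eq_add _ _)
  have hbdry : ∀ y ∈ K, ∀ t ∈ Icc T t₀, y ∉ U ∨ t = T → φ y t - B y t ≤ 0 := by
    intro y hy t ht hcase
    have hedge : ‖y - e‖ = r ∨ ‖y - e‖ = R ∨ t = T := by
      rcases hcase with hyU | hTt
      · by_contra! h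
        exact hyU ⟨lt_of_le_of_ne hy.1 h.1.symm, lt_of_le_of_ne hy.2 h.2.1⟩
      · exact Or.inr (Or.inr hTt)
    linarith [hbound y (hne hy.1) t (ht.2.trans ht₀), rpow_le_heatBarrier hn ha hr hT hy ht hedge]
  have := nonpos_of_parabolicBoundary hK hU hUK
    ((hcont.mono (prod_mono (subset_univ _) fun s hs => hs.2.trans ht₀)).sub
      (continuousOn_heatBarrier fun p hp => hne hp.1.1))
    hsub hbdry (y := y) ⟨hry, hyR⟩ ht
  exact sub_nonpos.1 this

theorem nonpos_of_heat_of_le_rpow {n : ℕ} {e : EuclideanSpace ℝ (Fin n)}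
    {φ : EuclideanSpace ℝ (Fin n) → ℝ → ℝ} {a : ℝ}
    (hcont : ContinuousOn (fun q : EuclideanSpace ℝ (Fin n) × ℝ => φ q.1 q.2) (univ ×ˢ Iic 0))
    (hC2 : ∀ t ≤ (0 : ℝ), ContDiffOn ℝ 2 (fun y => φ y t) {e}ᶜ)
    (hheat : ∀ y ≠ e, ∀ t ≤ (0 : ℝ), HasDerivWithinAt (φ y) (lap (fun z => φ z t) y) (Iic 0) t)
    (hbound : ∀ y ≠ e, ∀ t ≤ (0 : ℝ), φ y t ≤ ‖y - e‖ ^ (a + 2))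
    (ha1 : -(n : ℝ) < a) (ha2 : a < -2) {y : EuclideanSpace ℝ (Fin n)} (hy : y ≠ e)
    {t : ℝ} (ht : t ≤ 0) : φ y t ≤ 0 := by
  have hn : 0 < n := by exact_mod_cast (by linarith : (0 : ℝ) < n)
  have han : 0 < a + n := by linarith
  set ρ := ‖y - e‖
  have hρ : 0 < ρ := norm_pos_iff.2 (sub_ne_zero.2 hy)
  have hlimT : ∀ r R, 0 < r → r ≤ ρ → ρ ≤ R →
      φ y t ≤ r ^ (a + n) * (ρ ^ 2) ^ ((2 - n : ℝ) / 2) + R ^ (a + 2) := by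
    intro r R hr hrρ hρR
    have hgap : Tendsto (fun T => 2 * n * (t - T)) atBot atTop :=
      (tendsto_atTop_add_const_left _ t tendsto_neg_atBot_atTop).const_mul_atTop (by positivity)
    have hM := (tendsto_const_nhds (x := r ^ (a + 2))).div_atTop hgap
    refine ge_of_tendsto (x := atBot) (f := fun T => heatBarrier n (r ^ (a + n)) (R ^ (a + 2))
      (r ^ (a + 2) / (2 * n * (t - T))) R t t (ρ ^ 2)) ?_ ?_
    · simpa [heatBarrier] using (hM.mul_const (R ^ 2 - ρ ^ 2)).const_add _
    · exact (eventually_lt_atBot t).mono fun T hT => le_heatBarrier hn hcont hC2 hheat hbound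
        (by linarith) hr hT ht hrρ hρR ⟨hT.le, le_rfl⟩
  have hlimr : ∀ R, ρ ≤ R → φ y t ≤ R ^ (a + 2) := by
    intro R hρR
    have hr := (((Real.continuousAt_rpow_const 0 _ (Or.inr han.le)).tendsto.mono_left
      (nhdsWithin_le_nhds (s := Ioi 0))).mul_const ((ρ ^ 2) ^ ((2 - n : ℝ) / 2))).add_const
      (R ^ (a + 2))
    rw [Real.zero_rpow han.ne', zero_mul, zero_add] at hr
    exact ge_of_tendsto hr
      (mem_of_superset (Ioc_mem_nhdsGT hρ) fun r hr => hlimT r R hr.1 hr.2 hρR)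
  have hR : Tendsto (fun R : ℝ => R ^ (a + 2)) atTop (𝓝 0) := by
    simpa using tendsto_rpow_neg_atTop (y := -(a + 2)) (by linarith)
  exact ge_of_tendsto hR ((eventually_ge_atTop ρ).mono hlimr)

theorem liouville_ancient_heat_general (n : ℕ)
    (a : ℝ) (ha1 : -(n : ℝ) < a) (ha2 : a < -2)
    (e : EuclideanSpace ℝ (Fin n))
    (φ : EuclideanSpace ℝ (Fin n) → ℝ → ℝ)
    (hcont : ContinuousOn (fun q : EuclideanSpace ℝ (Fin n) × ℝ => φ q.1 q.2)
      (Set.univ ×ˢ Set.Iic (0 : ℝ)))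
    (hC2 : ∀ t ≤ (0 : ℝ), ContDiffOn ℝ 2 (fun y => φ y t) {e}ᶜ)
    (hC1 : ∀ y, y ≠ e → ContDiffOn ℝ 1 (φ y) (Set.Iic (0 : ℝ)))
    (hheat : ∀ y, y ≠ e → ∀ t ≤ (0 : ℝ),
      derivWithin (φ y) (Set.Iic (0 : ℝ)) t = lap (fun z => φ z t) y)
    (hbound : ∀ y, y ≠ e → ∀ t ≤ (0 : ℝ), |φ y t| ≤ ‖y - e‖ ^ (a + 2)) :
    ∀ y, ∀ t ≤ (0 : ℝ), φ y t = 0 := by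
  have hheat' : ∀ y ≠ e, ∀ t ≤ (0 : ℝ),
      HasDerivWithinAt (φ y) (lap (fun z => φ z t) y) (Iic 0) t := fun y hy t ht =>
    hheat y hy t ht ▸ ((hC1 y hy).differentiableOn (by simp) t ht).hasDerivWithinAt
  have hoff : ∀ y ≠ e, ∀ t ≤ (0 : ℝ), φ y t = 0 := fun y hy t ht => le_antisymm
    (nonpos_of_heat_of_le_rpow hcont hC2 hheat'
      (fun y hy t ht => (le_abs_self _).trans (hbound y hy t ht)) ha1 ha2 hy ht)
    (neg_nonpos.1 (nonpos_of_heat_of_le_rpow (φ := fun y t => -φ y t) hcont.neg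
      (fun t ht => (hC2 t ht).neg)
      (fun y hy t ht => lap_neg (fun z => φ z t) y ▸ (hheat' y hy t ht).neg)
      (fun y hy t ht => (neg_le_abs _).trans (hbound y hy t ht)) ha1 ha2 hy ht))
  intro y t ht
  have hn : 0 < n := by exact_mod_cast (by linarith : (0 : ℝ) < n)
  have : Nontrivial (EuclideanSpace ℝ (Fin n)) :=
    ⟨⟨EuclideanSpace.single ⟨0, hn⟩ 1, 0, by simp⟩⟩
  have hφt : Continuous fun z => φ z t :=
    hcont.comp_continuous (continuous_id.prodMk continuous_const) fun z => ⟨trivial, ht⟩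
  exact congrFun (hφt.ext_on (dense_compl_singleton e) continuous_const
    fun z hz => hoff z hz t ht) y

/-- Liouville-type theorem. An ancient solution of the heat equation on
`ℝⁿ ∖ {e}`, continuous on `ℝⁿ × (-∞,0]` and bounded pointwise by `|y-e|^{a+2}` with
`a ∈ (-n,-2)` (so `2-n < a+2 < 0`), vanishes identically. -/
theorem liouville_ancient_heat (n : ℕ) (hn : 3 ≤ n)
    (a : ℝ) (ha1 : -(n : ℝ) < a) (ha2 : a < -2)
    (e : EuclideanSpace ℝ (Fin n))
    (φ : EuclideanSpace ℝ (Fin n) → ℝ → ℝ)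
    (hcont : ContinuousOn (fun q : EuclideanSpace ℝ (Fin n) × ℝ => φ q.1 q.2)
      (Set.univ ×ˢ Set.Iic (0 : ℝ)))
    (hC2 : ∀ t ≤ (0 : ℝ), ContDiffOn ℝ 2 (fun y => φ y t) {e}ᶜ)
    (hC1 : ∀ y, y ≠ e → ContDiffOn ℝ 1 (φ y) (Set.Iic (0 : ℝ)))
    (hheat : ∀ y, y ≠ e → ∀ t ≤ (0 : ℝ),
      derivWithin (φ y) (Set.Iic (0 : ℝ)) t = lap (fun z => φ z t) y)
    (hbound : ∀ y, y ≠ e → ∀ t ≤ (0 : ℝ), |φ y t| ≤ ‖y - e‖ ^ (a + 2)) :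
    ∀ y, ∀ t ≤ (0 : ℝ), φ y t = 0 :=
  liouville_ancient_heat_general n a ha1 ha2 e φ hcont hC2 hC1 hheat hbound
end

section
/- Let Ω ⊆ ℝⁿ be open, let v : Ω → (0,∞) be a C² function with Δv(x) + 1 = 0 for all x ∈ Ω, let m ∈ (0,1), δ > 0 and T > 0, and define ψ̄(x,τ) = (T−τ)^{(1+δ)/(1−m)} · v(x)^{1/m} for x ∈ Ω and τ ∈ (0,T). Then for all x ∈ Ω and τ ∈ (0,T): ∂ψ̄/∂τ (x,τ) − Δₓ( ψ̄(x,τ)^m ) = (T−τ)^{m(1+δ)/(1−m)} · ( 1 − ((1+δ)/(1−m)) (T−τ)^{δ} v(x)^{1/m} ). In particular, if v is bounded on Ω, then there exists τ₀ ∈ (0,T) such that ∂ψ̄/∂τ − Δₓ(ψ̄^m) > 0 on Ω × (τ₀, T), i.e. ψ̄ is a strict supersolution of the fast diffusion equation ∂w/∂τ = Δ(w^m) for times close to the extinction time T. -/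
open Real Set

/-!
Since `v > 0`, the separated profile satisfies `ψ̄(·, τ)^m = (T - τ)^{m(1+δ)/(1-m)} v`, so its
Laplacian is `-(T - τ)^{m(1+δ)/(1-m)}` by `Δv = -1`, while `∂ψ̄/∂τ` is an explicit power of
`T - τ` that carries the extra factor `(T - τ)^δ`. That factor tends to `0` as `τ → T`, so for
bounded `v` the Laplacian term dominates near the extinction time.
-/

open Filter Topology

section Laplacian

variable {n : ℕ}

theorem Filter.EventuallyEq.lap_eq {f g : EuclideanSpace ℝ (Fin n) → ℝ}
    {x : EuclideanSpace ℝ (Fin n)} (h : f =ᶠ[𝓝 x] g) : lap f x = lap g x := by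
  refine Finset.sum_congr rfl fun i _ => ?_
  have hderiv : (fun y => fderiv ℝ f y (EuclideanSpace.single i 1))
      =ᶠ[𝓝 x] (fun y => fderiv ℝ g y (EuclideanSpace.single i 1)) :=
    (h.fderiv (𝕜 := ℝ)).mono fun y hy => by simp only [hy]
  rw [hderiv.fderiv_eq]

-- No smoothness is needed: `fderiv` commutes with scalars over a field even where `f` is not
-- differentiable, both sides being `0` there.
theorem lap_const_mul (c : ℝ) (f : EuclideanSpace ℝ (Fin n) → ℝ)
    (x : EuclideanSpace ℝ (Fin n)) : lap (fun y => c * f y) x = c * lap f x := by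
  unfold lap
  rw [Finset.mul_sum]
  refine Finset.sum_congr rfl fun i _ => ?_
  have hf : (fun y => c * f y) = c • f := rfl
  have hderiv : (fun y => fderiv ℝ (c • f) y (EuclideanSpace.single i 1))
      = c • fun y => fderiv ℝ f y (EuclideanSpace.single i 1) := by
    ext y
    simp [fderiv_const_smul_field]
  rw [hf, hderiv, fderiv_const_smul_field]
  rfl

theorem lap_mul_rpow_one_div_rpow {v : EuclideanSpace ℝ (Fin n) → ℝ}
    {x : EuclideanSpace ℝ (Fin n)} (hv : ∀ᶠ y in 𝓝 x, 0 ≤ v y) {a m : ℝ} (ha : 0 ≤ a)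
    (hm : m ≠ 0) : lap (fun y => (a * v y ^ (1 / m)) ^ m) x = a ^ m * lap v x := by
  have hpow : (fun y => (a * v y ^ (1 / m)) ^ m) =ᶠ[𝓝 x] fun y => a ^ m * v y := by
    filter_upwards [hv] with y hy
    rw [mul_rpow ha (rpow_nonneg hy _), ← rpow_mul hy, one_div_mul_cancel hm, rpow_one]
  rw [hpow.lap_eq, lap_const_mul]

end Laplacian

theorem hasDerivAt_sub_rpow_mul {T τ : ℝ} (hτ : τ < T) (p c : ℝ) :
    HasDerivAt (fun s => (T - s) ^ p * c) (-(p * (T - τ) ^ (p - 1) * c)) τ := by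
  have hsub : HasDerivAt (fun s : ℝ => T - s) (-1) τ := by
    simpa using (hasDerivAt_id τ).const_sub T
  have hrpow := (hasDerivAt_rpow_const (p := p) (Or.inl (sub_pos.2 hτ).ne')).comp τ hsub
  exact (hrpow.mul_const c).congr_deriv (by ring)

theorem exists_Ioo_forall_of_eventually_nhdsLT {T : ℝ} (hT : 0 < T) {P : ℝ → Prop}
    (h : ∀ᶠ τ in 𝓝[<] T, P τ) : ∃ τ₀ ∈ Ioo 0 T, ∀ τ ∈ Ioo τ₀ T, P τ := by
  obtain ⟨τ₀, hτ₀, hP⟩ := (mem_nhdsLT_iff_exists_mem_Ico_Ioo_subset (half_lt_self hT)).1 h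
  exact ⟨τ₀, ⟨(half_pos hT).trans_le hτ₀.1, hτ₀.2⟩, hP⟩

theorem eventually_mul_sub_rpow_lt_one (K T : ℝ) {δ : ℝ} (hδ : 0 < δ) :
    ∀ᶠ τ in 𝓝 T, K * (T - τ) ^ δ < 1 := by
  have hcont : ContinuousAt (fun τ : ℝ => K * (T - τ) ^ δ) T :=
    continuousAt_const.mul ((continuousAt_const.sub continuousAt_id).rpow_const (Or.inr hδ.le))
  have hzero : K * (T - T) ^ δ < 1 := by simp [zero_rpow hδ.ne']
  exact hcont.eventually_lt continuousAt_const hzero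

theorem deriv_sub_lap_eq {n : ℕ} {v : EuclideanSpace ℝ (Fin n) → ℝ}
    {x : EuclideanSpace ℝ (Fin n)} (hv : ∀ᶠ y in 𝓝 x, 0 ≤ v y) (hlap : lap v x = -1)
    {m δ T τ : ℝ} (hm0 : m ≠ 0) (hm1 : m ≠ 1) (hτ : τ < T)
    {ψ : EuclideanSpace ℝ (Fin n) → ℝ → ℝ}
    (hψ : ∀ y s, ψ y s = (T - s) ^ ((1 + δ) / (1 - m)) * v y ^ (1 / m)) :
    deriv (ψ x) τ - lap (fun y => ψ y τ ^ m) x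
      = (T - τ) ^ (m * (1 + δ) / (1 - m)) *
        (1 - ((1 + δ) / (1 - m)) * (T - τ) ^ δ * v x ^ (1 / m)) := by
  have ha : 0 < T - τ := sub_pos.2 hτ
  have hψx : ψ x = fun s => (T - s) ^ ((1 + δ) / (1 - m)) * v x ^ (1 / m) := funext (hψ x)
  have hlapψ : lap (fun y => ψ y τ ^ m) x = -(T - τ) ^ (m * (1 + δ) / (1 - m)) := by
    simp only [hψ]
    rw [lap_mul_rpow_one_div_rpow hv (rpow_nonneg ha.le _) hm0, hlap, ← rpow_mul ha.le]
    ring_nf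
  have hexp : (1 + δ) / (1 - m) - 1 = m * (1 + δ) / (1 - m) + δ := by
    field_simp [sub_ne_zero.2 hm1.symm]
    ring
  rw [hψx, (hasDerivAt_sub_rpow_mul hτ _ _).deriv, hlapψ, hexp, rpow_add ha]
  ring

theorem supersolution_near_extinction_general (n : ℕ)
    (Ω : Set (EuclideanSpace ℝ (Fin n))) (hΩ : IsOpen Ω)
    (v : EuclideanSpace ℝ (Fin n) → ℝ)
    (hvpos : ∀ x ∈ Ω, 0 < v x)
    (hveq : ∀ x ∈ Ω, lap v x + 1 = 0)
    (m δ T : ℝ) (hm : m ∈ Set.Ioo (0 : ℝ) 1) (hδ : 0 < δ) (hT : 0 < T)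
    (ψ : EuclideanSpace ℝ (Fin n) → ℝ → ℝ)
    (hψ : ∀ x τ, ψ x τ = (T - τ) ^ ((1 + δ) / (1 - m)) * v x ^ (1 / m)) :
    (∀ x ∈ Ω, ∀ τ ∈ Set.Ioo (0 : ℝ) T,
      deriv (ψ x) τ - lap (fun y => ψ y τ ^ m) x
        = (T - τ) ^ (m * (1 + δ) / (1 - m)) *
          (1 - ((1 + δ) / (1 - m)) * (T - τ) ^ δ * v x ^ (1 / m))) ∧
    ((∃ C, ∀ x ∈ Ω, v x ≤ C) →
      ∃ τ₀ ∈ Set.Ioo (0 : ℝ) T, ∀ x ∈ Ω, ∀ τ ∈ Set.Ioo τ₀ T,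
        0 < deriv (ψ x) τ - lap (fun y => ψ y τ ^ m) x) := by
  have identity : ∀ x ∈ Ω, ∀ τ ∈ Ioo 0 T, deriv (ψ x) τ - lap (fun y => ψ y τ ^ m) x
      = (T - τ) ^ (m * (1 + δ) / (1 - m)) *
        (1 - ((1 + δ) / (1 - m)) * (T - τ) ^ δ * v x ^ (1 / m)) := fun x hx τ hτ =>
    deriv_sub_lap_eq (eventually_of_mem (hΩ.mem_nhds hx) fun y hy => (hvpos y hy).le)
      (by linarith [hveq x hx]) hm.1.ne' hm.2.ne hτ.2 hψ
  refine ⟨identity, fun ⟨C, hC⟩ => ?_⟩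
  set p := (1 + δ) / (1 - m)
  have hp : 0 < p := div_pos (by linarith) (sub_pos.2 hm.2)
  obtain ⟨τ₀, hτ₀, hsmall⟩ := exists_Ioo_forall_of_eventually_nhdsLT hT
    (nhdsWithin_le_nhds (eventually_mul_sub_rpow_lt_one (p * |C| ^ (1 / m)) T hδ))
  refine ⟨τ₀, hτ₀, fun x hx τ hτ => ?_⟩
  have ha : 0 < T - τ := sub_pos.2 hτ.2
  have hvC : v x ^ (1 / m) ≤ |C| ^ (1 / m) :=
    rpow_le_rpow (hvpos x hx).le ((hC x hx).trans (le_abs_self C)) (by simp [hm.1.le])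
  have hbound : p * (T - τ) ^ δ * v x ^ (1 / m) ≤ p * |C| ^ (1 / m) * (T - τ) ^ δ := by
    have := mul_le_mul_of_nonneg_left hvC (mul_nonneg hp.le (rpow_nonneg ha.le δ))
    linarith
  rw [identity x hx τ ⟨hτ₀.1.trans hτ.1, hτ.2⟩]
  exact mul_pos (rpow_pos_of_pos ha _) (by linarith [hsmall τ hτ])

/-- with `Δv + 1 = 0`, `v > 0` on `Ω` and
`ψ̄(x,τ) = (T-τ)^{(1+δ)/(1-m)} v(x)^{1/m}`, one has
`∂ψ̄/∂τ - Δ(ψ̄^m) = (T-τ)^{m(1+δ)/(1-m)} (1 - ((1+δ)/(1-m))(T-τ)^δ v^{1/m})`;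
in particular if `v` is bounded then `ψ̄` is a strict supersolution of `∂w/∂τ = Δ(w^m)`
for times close to `T`. -/
theorem supersolution_near_extinction (n : ℕ)
    (Ω : Set (EuclideanSpace ℝ (Fin n))) (hΩ : IsOpen Ω)
    (v : EuclideanSpace ℝ (Fin n) → ℝ)
    (hv2 : ContDiffOn ℝ 2 v Ω) (hvpos : ∀ x ∈ Ω, 0 < v x)
    (hveq : ∀ x ∈ Ω, lap v x + 1 = 0)
    (m δ T : ℝ) (hm : m ∈ Set.Ioo (0 : ℝ) 1) (hδ : 0 < δ) (hT : 0 < T)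
    (ψ : EuclideanSpace ℝ (Fin n) → ℝ → ℝ)
    (hψ : ∀ x τ, ψ x τ = (T - τ) ^ ((1 + δ) / (1 - m)) * v x ^ (1 / m)) :
    (∀ x ∈ Ω, ∀ τ ∈ Set.Ioo (0 : ℝ) T,
      deriv (ψ x) τ - lap (fun y => ψ y τ ^ m) x
        = (T - τ) ^ (m * (1 + δ) / (1 - m)) *
          (1 - ((1 + δ) / (1 - m)) * (T - τ) ^ δ * v x ^ (1 / m))) ∧
    ((∃ C, ∀ x ∈ Ω, v x ≤ C) →
      ∃ τ₀ ∈ Set.Ioo (0 : ℝ) T, ∀ x ∈ Ω, ∀ τ ∈ Set.Ioo τ₀ T,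
        0 < deriv (ψ x) τ - lap (fun y => ψ y τ ^ m) x) :=
  supersolution_near_extinction_general n Ω hΩ v hvpos hveq m δ T hm hδ hT ψ hψ
end
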